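/- arXiv:2602.10268 — 7 statements merged into one kernel-verified Lean document; each statement's English description precedes it below -/
import Mathlib

section
/- Let V be a nontrivial finite-dimensional real inner product space and let L : V → V be a self-adjoint linear endomorphism satisfying ⟨L h, h⟩ ≥ λ₁‖h‖² for all h ∈ V, where λ₁ > 0. Let ν, γ, τ > 0, set θ = min(νλ₁, γ), and let b, F ∈ V and u ∈ V, r ∈ ℝ be given. Suppose u⁺ ∈ V and r⁺ ∈ ℝ satisfy the one-step ETD-mr-SAV scheme: u⁺ = exp(-τνL) u + τ·φ₁(τνL)(F - (1 - (r⁺)²) b) and r⁺ = exp(-τγ) r + τ(1 - r⁺)⟨φ₁(τνL) b, u⁺⟩. Then ‖u⁺‖² + (r⁺ + 1)² ≤ exp(-θτ)(‖u‖² + (r + 1)²) + τ(‖F‖²/(νλ₁) + γ). -/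
open scoped RealInnerProductSpace

-- exp applied to an eigenvector
lemma exp_apply_eigen {V : Type*} [NormedAddCommGroup V] [InnerProductSpace ℝ V]
    [FiniteDimensional ℝ V] (A : V →L[ℝ] V) (c : ℝ) (v : V) (hv : A v = c • v) :
    NormedSpace.exp A v = Real.exp c • v := by
  have hpow : ∀ n : ℕ, (A ^ n) v = c ^ n • v := by
    intro n
    induction n with
    | zero => simp
    | succ n ih =>
      rw [pow_succ, pow_succ, ContinuousLinearMap.mul_apply, hv, map_smul, ih, smul_smul,
        mul_comm]
  have hsum : Summable (fun n : ℕ => ((n.factorial : ℝ))⁻¹ • A ^ n) :=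
    NormedSpace.expSeries_summable' A
  have hsum2 : Summable (fun n : ℕ => ((n.factorial : ℝ))⁻¹ * c ^ n) := by
    simpa using NormedSpace.expSeries_summable' (𝕂 := ℝ) c
  calc NormedSpace.exp A v = (∑' n : ℕ, ((n.factorial : ℝ))⁻¹ • A ^ n) v := by
        rw [NormedSpace.exp_eq_tsum ℝ]
    _ = ∑' n : ℕ, (((n.factorial : ℝ))⁻¹ • A ^ n) v :=
        ((ContinuousLinearMap.apply ℝ V v).map_tsum hsum)
    _ = ∑' n : ℕ, (((n.factorial : ℝ))⁻¹ * c ^ n) • v := by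
        refine tsum_congr fun n => ?_
        rw [ContinuousLinearMap.smul_apply, hpow, smul_smul]
    _ = (∑' n : ℕ, ((n.factorial : ℝ))⁻¹ * c ^ n) • v := hsum2.tsum_smul_const v
    _ = Real.exp c • v := by
        congr 1
        rw [Real.exp_eq_exp_ℝ, NormedSpace.exp_eq_tsum ℝ]
        simp [smul_eq_mul]

lemma young_aux (t a y : ℝ) (h0 : 0 < t) (h1 : t < 1) :
    (t * a + y) ^ 2 ≤ t * a ^ 2 + y ^ 2 / (1 - t) := by
  have ht : 0 < 1 - t := by linarith
  rw [← sub_nonneg]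
  have key : 0 ≤ (1 - t) * (t * a ^ 2 + y ^ 2 / (1 - t) - (t * a + y) ^ 2) := by
    have h2 : (1 - t) * (y ^ 2 / (1 - t)) = y ^ 2 := by field_simp
    nlinarith [mul_nonneg h0.le (sq_nonneg ((1 - t) * a - y))]
  nlinarith [key, ht]

lemma mode_bound (τ ν lam1 μ a c : ℝ) (hτ : 0 < τ) (hν : 0 < ν) (hlam1 : 0 < lam1)
    (hμ : lam1 ≤ μ) :
    (Real.exp (-(τ * ν) * μ) * a + τ * ((1 - Real.exp (-(τ * ν) * μ)) / (τ * ν * μ)) * c) ^ 2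
      ≤ Real.exp (-(τ * (ν * lam1))) * a ^ 2 + τ / (ν * lam1) * c ^ 2 := by
  set x : ℝ := τ * ν * μ with hx
  have hμ0 : 0 < μ := lt_of_lt_of_le hlam1 hμ
  have hx0 : 0 < x := by positivity
  have hx1 : τ * ν * lam1 ≤ x := by
    have := mul_le_mul_of_nonneg_left hμ (by positivity : (0:ℝ) ≤ τ * ν)
    simpa [hx, mul_assoc] using this
  set t : ℝ := Real.exp (-(τ * ν) * μ) with htdef
  have hteq : t = Real.exp (-x) := by rw [htdef, hx]; ring_nf
  have ht0 : 0 < t := Real.exp_pos _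
  have ht1 : t < 1 := by rw [hteq]; exact Real.exp_lt_one_iff.2 (by linarith)
  have h1t : 1 - t ≤ x := by
    have := Real.add_one_le_exp (-x)
    rw [hteq]; linarith
  have hY := young_aux t a (τ * ((1 - t) / x) * c) ht0 ht1
  refine hY.trans ?_
  have hA : t * a ^ 2 ≤ Real.exp (-(τ * (ν * lam1))) * a ^ 2 := by
    have : t ≤ Real.exp (-(τ * (ν * lam1))) := by
      rw [hteq]
      exact Real.exp_le_exp.2 (by nlinarith)
    nlinarith [sq_nonneg a]
  have hB : (τ * ((1 - t) / x) * c) ^ 2 / (1 - t) ≤ τ / (ν * lam1) * c ^ 2 := by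
    have hne : (1 - t) ≠ 0 := by linarith
    have hxne : x ≠ 0 := ne_of_gt hx0
    have heq : (τ * ((1 - t) / x) * c) ^ 2 / (1 - t) = τ ^ 2 * (1 - t) / x ^ 2 * c ^ 2 := by
      field_simp
    rw [heq]
    have h2 : τ ^ 2 * (1 - t) / x ^ 2 ≤ τ / (ν * lam1) := by
      rw [div_le_div_iff₀ (by positivity) (by positivity)]
      have hτν : 0 < τ * ν * lam1 := by positivity
      nlinarith [mul_le_mul_of_nonneg_left h1t (by positivity : (0:ℝ) ≤ τ ^ 2 * (ν * lam1)),
        mul_le_mul_of_nonneg_left hx1 (mul_nonneg hτ.le hx0.le)]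
    nlinarith [sq_nonneg c, h2]
  linarith

set_option maxHeartbeats 1000000 in
/-- One-step long-time stability of the ETD-mr-SAV scheme.
`φ` plays the role of `φ₁(τνL) = (τνL)⁻¹ ∘ (id - exp(-τνL))`, characterized by the
defining identity `(τν) • (L ∘ φ) = id - exp(-(τν)L)` (which determines it uniquely,
since `L` is positive definite, hence bijective). -/
theorem etd_mr_sav_one_step_stability
    {V : Type*} [NormedAddCommGroup V] [InnerProductSpace ℝ V]
    [FiniteDimensional ℝ V] [Nontrivial V]
    (L : V →L[ℝ] V) (hL : IsSelfAdjoint L)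
    (lam1 : ℝ) (hlam1 : 0 < lam1)
    (hLlow : ∀ h : V, lam1 * ‖h‖ ^ 2 ≤ ⟪L h, h⟫)
    (ν γ τ : ℝ) (hν : 0 < ν) (hγ : 0 < γ) (hτ : 0 < τ)
    (θ : ℝ) (hθ : θ = min (ν * lam1) γ)
    (b F u : V) (r : ℝ)
    (φ : V →L[ℝ] V)
    (hφ : (τ * ν) • (L ∘L φ) = 1 - NormedSpace.exp (-(τ * ν) • L))
    (u' : V) (r' : ℝ)
    (hu' : u' = NormedSpace.exp (-(τ * ν) • L) u
            + τ • φ (F - (1 - r' ^ 2) • b))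
    (hr' : r' = Real.exp (-(τ * γ)) * r + τ * (1 - r') * ⟪φ b, u'⟫) :
    ‖u'‖ ^ 2 + (r' + 1) ^ 2
      ≤ Real.exp (-(θ * τ)) * (‖u‖ ^ 2 + (r + 1) ^ 2)
        + τ * (‖F‖ ^ 2 / (ν * lam1) + γ) := by
  have hsym : (↑L : V →ₗ[ℝ] V).IsSymmetric := hL.isSymmetric
  set n := Module.finrank ℝ V with hn
  have hrank : Module.finrank ℝ V = n := rfl
  set B := hsym.eigenvectorBasis hrank with hB
  set μ := hsym.eigenvalues hrank with hμdef
  have hBi : ∀ i, L (B i) = μ i • B i := fun i => hsym.apply_eigenvectorBasis hrank i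
  have hBnorm : ∀ i, ‖B i‖ = 1 := fun i => B.orthonormal.1 i
  have hμ : ∀ i, lam1 ≤ μ i := by
    intro i
    have h := hLlow (B i)
    rw [hBi i, real_inner_smul_left, real_inner_self_eq_norm_sq, hBnorm i] at h
    simpa using h
  -- exp acting on eigenvectors
  set E := NormedSpace.exp (-(τ * ν) • L) with hE
  have hEi : ∀ i, E (B i) = Real.exp (-(τ * ν) * μ i) • B i := by
    intro i
    apply exp_apply_eigen
    rw [ContinuousLinearMap.smul_apply, hBi i, smul_smul]
  have hAsa : IsSelfAdjoint (-(τ * ν) • L) := (IsSelfAdjoint.all _).smul hL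
  have hEsa : IsSelfAdjoint E := hAsa.exp
  have hEcoef : ∀ (x : V) i, ⟪E x, B i⟫ = Real.exp (-(τ * ν) * μ i) * ⟪x, B i⟫ := by
    intro x i
    have hsyE : ⟪E x, B i⟫ = ⟪x, E (B i)⟫ := hEsa.isSymmetric x (B i)
    rw [hsyE, hEi i, real_inner_smul_right]
  have hφcoef : ∀ (x : V) i,
      ⟪φ x, B i⟫ = (1 - Real.exp (-(τ * ν) * μ i)) / (τ * ν * μ i) * ⟪x, B i⟫ := by
    intro x i
    have h1 := DFunLike.congr_fun hφ x
    rw [ContinuousLinearMap.smul_apply, ContinuousLinearMap.coe_comp',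
      Function.comp_apply, ContinuousLinearMap.sub_apply, ContinuousLinearMap.one_apply] at h1
    have h2 : ⟪(τ * ν) • L (φ x), B i⟫ = ⟪x - E x, B i⟫ := by rw [h1]
    have hsy : ⟪L (φ x), B i⟫ = ⟪φ x, L (B i)⟫ := hsym (φ x) (B i)
    rw [real_inner_smul_left, hsy, hBi i, real_inner_smul_right, inner_sub_left,
      hEcoef x i] at h2
    have hμ0 : 0 < μ i := lt_of_lt_of_le hlam1 (hμ i)
    have hne : τ * ν * μ i ≠ 0 := by positivity
    rw [div_mul_eq_mul_div, eq_div_iff hne]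
    linear_combination h2
  -- Parseval
  have par : ∀ x : V, ‖x‖ ^ 2 = ∑ i, ⟪x, B i⟫ ^ 2 := by
    intro x
    rw [← real_inner_self_eq_norm_sq, ← B.sum_inner_mul_inner x x]
    exact Finset.sum_congr rfl fun i _ => by rw [sq, real_inner_comm (B i) x]
  set w : V := E u + τ • φ F with hwdef
  have hwcoef : ∀ i, ⟪w, B i⟫ =
      Real.exp (-(τ * ν) * μ i) * ⟪u, B i⟫
        + τ * ((1 - Real.exp (-(τ * ν) * μ i)) / (τ * ν * μ i)) * ⟪F, B i⟫ := by
    intro i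
    rw [hwdef, inner_add_left, real_inner_smul_left, hEcoef u i, hφcoef F i]
    ring
  have hw : ‖w‖ ^ 2 ≤ Real.exp (-(τ * (ν * lam1))) * ‖u‖ ^ 2 + τ / (ν * lam1) * ‖F‖ ^ 2 := by
    rw [par w, par u, par F, Finset.mul_sum, Finset.mul_sum, ← Finset.sum_add_distrib]
    refine Finset.sum_le_sum fun i _ => ?_
    rw [hwcoef i]
    exact mode_bound τ ν lam1 (μ i) _ _ hτ hν hlam1 (hμ i)
  -- rewrite u' = w - s • φ b
  set s : ℝ := τ * (1 - r' ^ 2) with hs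
  have hu'2 : u' = w - s • φ b := by
    rw [hu', map_sub, map_smul, smul_sub, hwdef, smul_smul]
    abel
  have h1 : ‖u'‖ ^ 2 = ⟪w, u'⟫ - s * ⟪φ b, u'⟫ := by
    conv_lhs => rw [← real_inner_self_eq_norm_sq]
    conv_lhs => rw [hu'2]
    rw [inner_sub_left, real_inner_smul_left, ← hu'2]
  set e : ℝ := Real.exp (-(τ * γ)) with hedef
  have he0 : 0 < e := Real.exp_pos _
  have he1 : e < 1 := Real.exp_lt_one_iff.2 (by nlinarith)
  have key : ‖u'‖ ^ 2 + (r' + 1) ^ 2 = ⟪w, u'⟫ + (r' + 1) * (e * (r + 1) + (1 - e)) := by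
    rw [hs] at h1
    linear_combination h1 + (r' + 1) * hr'
  have hCS : ⟪w, u'⟫ ≤ ‖w‖ * ‖u'‖ := real_inner_le_norm w u'
  set Q : ℝ := e * |r + 1| + (1 - e) with hQdef
  have hQ0 : 0 ≤ Q := by
    have h1 : 0 ≤ e * |r + 1| := mul_nonneg he0.le (abs_nonneg _)
    rw [hQdef]; linarith
  have habs : (r' + 1) * (e * (r + 1) + (1 - e)) ≤ |r' + 1| * Q := by
    calc (r' + 1) * (e * (r + 1) + (1 - e)) ≤ |(r' + 1) * (e * (r + 1) + (1 - e))| :=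
          le_abs_self _
      _ = |r' + 1| * |e * (r + 1) + (1 - e)| := abs_mul _ _
      _ ≤ |r' + 1| * Q := by
          refine mul_le_mul_of_nonneg_left ?_ (abs_nonneg _)
          calc |e * (r + 1) + (1 - e)| ≤ |e * (r + 1)| + |1 - e| := abs_add_le _ _
            _ = e * |r + 1| + (1 - e) := by
                rw [abs_mul, abs_of_pos he0, abs_of_pos (by linarith : (0:ℝ) < 1 - e)]
  have hstep : ‖u'‖ ^ 2 + (r' + 1) ^ 2 ≤ ‖w‖ * ‖u'‖ + |r' + 1| * Q := by
    rw [key]; exact add_le_add hCS habs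
  have hmain : ‖u'‖ ^ 2 + (r' + 1) ^ 2 ≤ ‖w‖ ^ 2 + Q ^ 2 := by
    have hb2 : (r' + 1) ^ 2 = |r' + 1| ^ 2 := (sq_abs _).symm
    nlinarith [sq_nonneg (‖w‖ - ‖u'‖), sq_nonneg (Q - |r' + 1|), hstep]
  have hQ2 : Q ^ 2 ≤ e * (r + 1) ^ 2 + τ * γ := by
    have hY := young_aux e |r + 1| (1 - e) he0 he1
    have h1e : 1 - e ≤ τ * γ := by
      have := Real.add_one_le_exp (-(τ * γ))
      rw [← hedef] at this; linarith
    have h1e' : (1:ℝ) - e ≠ 0 := by linarith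
    have : (1 - e) ^ 2 / (1 - e) = 1 - e := by
      rw [sq, mul_div_assoc, div_self h1e', mul_one]
    rw [hQdef]
    calc (e * |r + 1| + (1 - e)) ^ 2 ≤ e * |r + 1| ^ 2 + (1 - e) ^ 2 / (1 - e) := hY
      _ = e * (r + 1) ^ 2 + (1 - e) := by rw [sq_abs, this]
      _ ≤ e * (r + 1) ^ 2 + τ * γ := by linarith
  have hθ1 : Real.exp (-(τ * (ν * lam1))) ≤ Real.exp (-(θ * τ)) :=
    Real.exp_le_exp.2 (by rw [hθ]; nlinarith [min_le_left (ν * lam1) γ])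
  have hθ2 : e ≤ Real.exp (-(θ * τ)) := by
    rw [hedef]
    exact Real.exp_le_exp.2 (by rw [hθ]; nlinarith [min_le_right (ν * lam1) γ])
  have hu2 : (0:ℝ) ≤ ‖u‖ ^ 2 := sq_nonneg _
  have hr2 : (0:ℝ) ≤ (r + 1) ^ 2 := sq_nonneg _
  have hfin : τ / (ν * lam1) * ‖F‖ ^ 2 = τ * (‖F‖ ^ 2 / (ν * lam1)) := by ring
  calc ‖u'‖ ^ 2 + (r' + 1) ^ 2 ≤ ‖w‖ ^ 2 + Q ^ 2 := hmain
    _ ≤ (Real.exp (-(τ * (ν * lam1))) * ‖u‖ ^ 2 + τ / (ν * lam1) * ‖F‖ ^ 2)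
        + (e * (r + 1) ^ 2 + τ * γ) := add_le_add hw hQ2
    _ ≤ Real.exp (-(θ * τ)) * (‖u‖ ^ 2 + (r + 1) ^ 2) + τ * (‖F‖ ^ 2 / (ν * lam1) + γ) := by
        nlinarith [mul_le_mul_of_nonneg_right hθ1 hu2, mul_le_mul_of_nonneg_right hθ2 hr2]
end

section
/- Let V be a nontrivial finite-dimensional real inner product space and let L : V → V be a self-adjoint linear endomorphism satisfying ⟨L h, h⟩ ≥ λ₁‖h‖² for all h ∈ V, where λ₁ > 0. Let ν, γ > 0, set θ = min(νλ₁, γ), let (τ_k)_{k≥2} be positive step sizes, let (b^n)_{n≥1}, (F^n)_{n≥1} be vectors in V with ‖F^n‖ ≤ M for all n, and suppose the sequences (u^n)_{n≥1} ⊆ V and (r^n)_{n≥1} ⊆ ℝ satisfy, for every n ≥ 1, the variable-step ETD-mr-SAV scheme: u^{n+1} = exp(-τ_{n+1}νL) u^n + τ_{n+1}·φ₁(τ_{n+1}νL)(F^n - (1 - (r^{n+1})²) b^n) and r^{n+1} = exp(-τ_{n+1}γ) r^n + τ_{n+1}(1 - r^{n+1})⟨φ₁(τ_{n+1}νL) b^n,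 u^{n+1}⟩. Then for all n ≥ 1, ‖u^{n+1}‖² + (r^{n+1} + 1)² ≤ exp(-θ·Σ_{i=1}^{n} τ_{i+1})·(‖u^1‖² + (r^1 + 1)²) + (M²/(νλ₁) + γ)·Σ_{i=1}^{n} exp(-θ·Σ_{j=i+1}^{n} τ_{j+1})·τ_{i+1}. -/
open scoped RealInnerProductSpace

section Helpers

variable {V : Type*} [NormedAddCommGroup V] [InnerProductSpace ℝ V]
  [FiniteDimensional ℝ V]

/-- exp of an operator applied to an eigenvector. -/
lemma exp_apply_eigenvec (A : V →L[ℝ] V) {v : V} {c : ℝ} (h : A v = c • v) :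
    NormedSpace.exp A v = Real.exp c • v := by
  have hpow : ∀ n : ℕ, (A ^ n) v = (c ^ n) • v := by
    intro n
    induction n with
    | zero => simp
    | succ k ih =>
      rw [pow_succ, ContinuousLinearMap.mul_apply, h, map_smul, ih, smul_smul, pow_succ]
      ring_nf
  have hs : Summable fun n : ℕ => ((n.factorial : ℝ)⁻¹) • A ^ n :=
    NormedSpace.expSeries_summable' (𝕂 := ℝ) A
  calc NormedSpace.exp A v = (∑' n : ℕ, ((n.factorial : ℝ)⁻¹) • A ^ n) v := by
        rw [NormedSpace.exp_eq_tsum ℝ]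
    _ = ∑' n : ℕ, (((n.factorial : ℝ)⁻¹) • A ^ n) v :=
        (ContinuousLinearMap.apply ℝ V v).map_tsum hs
    _ = ∑' n : ℕ, (((n.factorial : ℝ)⁻¹) * c ^ n) • v := by
        congr 1; funext n
        rw [ContinuousLinearMap.smul_apply, hpow, smul_smul]
    _ = (∑' n : ℕ, ((n.factorial : ℝ)⁻¹) * c ^ n) • v := by
        have hs2 : Summable fun n : ℕ => ((n.factorial : ℝ)⁻¹) * c ^ n := by
          simpa [smul_eq_mul] using NormedSpace.expSeries_summable' (𝕂 := ℝ) c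
        exact hs2.tsum_smul_const v
    _ = Real.exp c • v := by
        rw [Real.exp_eq_exp_ℝ, NormedSpace.exp_eq_tsum ℝ]
        simp [smul_eq_mul]

/-- norm bound for an operator diagonal w.r.t. an orthonormal basis. -/
lemma norm_apply_le_of_eigen {ι : Type*} [Fintype ι] [DecidableEq ι]
    (b : OrthonormalBasis ι ℝ V) (A : V →L[ℝ] V) (c : ι → ℝ)
    (hA : ∀ i, A (b i) = c i • b i) {C : ℝ} (hC : 0 ≤ C) (hc : ∀ i, |c i| ≤ C)
    (w : V) : ‖A w‖ ≤ C * ‖w‖ := by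
  have hparse : ∀ v : V, ‖v‖ ^ 2 = ∑ i, ⟪b i, v⟫ ^ 2 := by
    intro v
    have h := b.sum_inner_mul_inner v v
    rw [real_inner_self_eq_norm_sq] at h
    rw [← h]
    refine Finset.sum_congr rfl fun i _ => ?_
    rw [real_inner_comm v (b i), sq]
  have horth : ∀ i j : ι, ⟪b i, b j⟫ = if i = j then (1 : ℝ) else 0 :=
    orthonormal_iff_ite.mp b.orthonormal
  have hcoord : ∀ i, ⟪b i, A w⟫ = c i * ⟪b i, w⟫ := by
    intro i
    conv_lhs => rw [← b.sum_repr' w, map_sum]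
    rw [inner_sum]
    have : ∀ j, ⟪b i, A (⟪b j, w⟫ • b j)⟫
        = (if i = j then (1:ℝ) else 0) * (c j * ⟪b j, w⟫) := by
      intro j
      rw [map_smul, hA, real_inner_smul_right, real_inner_smul_right, horth]
      ring
    rw [Finset.sum_congr rfl fun j _ => this j]
    simp [ite_mul, Finset.sum_ite_eq]
  have h2 : ‖A w‖ ^ 2 ≤ (C * ‖w‖) ^ 2 := by
    rw [hparse (A w), mul_pow, hparse w, Finset.mul_sum]
    refine Finset.sum_le_sum fun i _ => ?_
    rw [hcoord, mul_pow]
    have h3 := hc i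
    have h4 : c i ^ 2 ≤ C ^ 2 := by
      have := sq_abs (c i)
      nlinarith [abs_nonneg (c i)]
    nlinarith [sq_nonneg (⟪b i, w⟫ : ℝ)]
  exact le_of_pow_le_pow_left₀ two_ne_zero (by positivity) h2

/-- antitonicity of `(1 - e⁻ʸ)/y`. -/
lemma one_sub_exp_neg_div_antitone {a b : ℝ} (ha : 0 < a) (hab : a ≤ b) :
    (1 - Real.exp (-b)) / b ≤ (1 - Real.exp (-a)) / a := by
  have hb : (0 : ℝ) < b := lt_of_lt_of_le ha hab
  have h := convexOn_exp.secant_mono (a := (0 : ℝ)) (x := -b) (y := -a)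
    trivial trivial trivial (by linarith) (by linarith) (by linarith)
  simp only [Real.exp_zero] at h
  have key : ∀ s t : ℝ, (s - 1) / (-t - 0) = (1 - s) / t := by
    intro s t
    rw [sub_zero, div_neg, ← neg_div, neg_sub]
  rw [key (Real.exp (-b)) b, key (Real.exp (-a)) a] at h
  exact h

set_option maxHeartbeats 2000000 in
/-- One-step energy estimate for the ETD-mr-SAV scheme. -/
lemma etd_sav_step_bound
    (L : V →L[ℝ] V) (hL : IsSelfAdjoint L)
    (lam1 : ℝ) (hlam1 : 0 < lam1) (hLlow : ∀ h : V, lam1 * ‖h‖ ^ 2 ≤ ⟪L h, h⟫)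
    (ν γ θ : ℝ) (hν : 0 < ν) (hγ : 0 < γ) (hθ1 : θ ≤ ν * lam1) (hθ2 : θ ≤ γ)
    (t : ℝ) (ht : 0 < t)
    (bv Fv : V) (M : ℝ) (hFM : ‖Fv‖ ≤ M)
    (u0 u1 : V) (r0 r1 : ℝ) (Φ : V →L[ℝ] V)
    (hΦid : (t * ν) • (L ∘L Φ) = 1 - NormedSpace.exp (-(t * ν) • L))
    (hu1 : u1 = NormedSpace.exp (-(t * ν) • L) u0 + t • Φ (Fv - (1 - r1 ^ 2) • bv))
    (hr1 : r1 = Real.exp (-(t * γ)) * r0 + t * (1 - r1) * ⟪Φ bv, u1⟫) :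
    ‖u1‖ ^ 2 + (r1 + 1) ^ 2
      ≤ Real.exp (-(θ * t)) * (‖u0‖ ^ 2 + (r0 + 1) ^ 2)
        + (M ^ 2 / (ν * lam1) + γ) * t := by
  have hd : 0 < ν * lam1 := mul_pos hν hlam1
  have hM0 : 0 ≤ M := le_trans (norm_nonneg _) hFM
  have hsym : LinearMap.IsSymmetric (↑L : V →ₗ[ℝ] V) := hL.isSymmetric
  have hn : Module.finrank ℝ V = Module.finrank ℝ V := rfl
  set bb := hsym.eigenvectorBasis hn with hbb
  set μ := hsym.eigenvalues hn with hμdef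
  have hev : ∀ i, L (bb i) = μ i • bb i := fun i => hsym.apply_eigenvectorBasis hn i
  have hnorm1 : ∀ i, ‖bb i‖ = 1 := fun i => bb.orthonormal.1 i
  have hμ : ∀ i, lam1 ≤ μ i := by
    intro i
    have h2 := hLlow (bb i)
    rw [hev i, real_inner_smul_left, real_inner_self_eq_norm_sq, hnorm1 i] at h2
    simpa using h2
  have hμpos : ∀ i, 0 < μ i := fun i => lt_of_lt_of_le hlam1 (hμ i)
  have hLinj : ∀ h : V, L h = 0 → h = 0 := by
    intro h h0
    have h1 := hLlow h
    rw [h0, inner_zero_left] at h1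
    have h2 : ‖h‖ ^ 2 ≤ 0 := by nlinarith
    have h3 : ‖h‖ ^ 2 = 0 := le_antisymm h2 (sq_nonneg _)
    have h4 : ‖h‖ = 0 := by
      have h5 := sq_abs ‖h‖
      nlinarith [abs_nonneg ‖h‖, norm_nonneg h]
    exact norm_eq_zero.mp h4
  set x := t * ν with hxdef
  have hx : 0 < x := mul_pos ht hν
  have hxl : 0 < x * lam1 := mul_pos hx hlam1
  set e1 := Real.exp (-(x * lam1)) with he1
  have hq0 : 0 < e1 := Real.exp_pos _
  have hq1 : e1 ≤ 1 := by
    rw [he1, Real.exp_le_one_iff]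
    nlinarith
  have hEeig : ∀ i, (NormedSpace.exp ((-x) • L)) (bb i) = Real.exp (-(x * μ i)) • bb i := by
    intro i
    apply exp_apply_eigenvec
    rw [ContinuousLinearMap.smul_apply, hev i, smul_smul]
    congr 1
    ring
  have hEnorm : ‖(NormedSpace.exp ((-x) • L)) u0‖ ≤ e1 * ‖u0‖ := by
    apply norm_apply_le_of_eigen bb _ _ hEeig hq0.le _ u0
    intro i
    rw [abs_of_pos (Real.exp_pos _), he1]
    apply Real.exp_le_exp.mpr
    nlinarith [hμ i]
  have hΦeig : ∀ i, Φ (bb i) = ((1 - Real.exp (-(x * μ i))) / (x * μ i)) • bb i := by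
    intro i
    have h0 := congrArg (fun T : V →L[ℝ] V => T (bb i)) hΦid
    simp only [ContinuousLinearMap.smul_apply, ContinuousLinearMap.coe_comp',
      Function.comp_apply, ContinuousLinearMap.sub_apply,
      ContinuousLinearMap.one_apply] at h0
    rw [hEeig i] at h0
    have hxμ : 0 < x * μ i := mul_pos hx (hμpos i)
    have h1 : x • L (Φ (bb i)) = (1 - Real.exp (-(x * μ i))) • bb i := by
      rw [h0, sub_smul, one_smul]
    have h2 : L (Φ (bb i)) = ((1 - Real.exp (-(x * μ i))) / x) • bb i := by
      have h3 := congrArg (fun w : V => x⁻¹ • w) h1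
      simp only [smul_smul, inv_mul_cancel₀ hx.ne', one_smul] at h3
      rw [h3]
      congr 1
      field_simp
    have hdiff : L (Φ (bb i) - ((1 - Real.exp (-(x * μ i))) / (x * μ i)) • bb i) = 0 := by
      rw [map_sub, map_smul, hev i, h2, smul_smul, ← sub_smul]
      have hs0 : (1 - Real.exp (-(x * μ i))) / x
          - (1 - Real.exp (-(x * μ i))) / (x * μ i) * μ i = 0 := by
        field_simp
        rw [div_self (hμpos i).ne']
        ring
      rw [hs0, zero_smul]
    exact sub_eq_zero.mp (hLinj _ hdiff)
  set cK := (1 - e1) / (x * lam1) with hcK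
  have hcK0 : 0 ≤ cK := by
    rw [hcK]
    apply div_nonneg _ hxl.le
    linarith
  have hΦnorm : ‖Φ Fv‖ ≤ cK * ‖Fv‖ := by
    apply norm_apply_le_of_eigen bb Φ _ hΦeig hcK0 _ Fv
    intro i
    have hxμ : 0 < x * μ i := mul_pos hx (hμpos i)
    have hnn : 0 ≤ (1 - Real.exp (-(x * μ i))) / (x * μ i) := by
      apply div_nonneg _ hxμ.le
      have : Real.exp (-(x * μ i)) ≤ 1 := by
        rw [Real.exp_le_one_iff]; linarith
      linarith
    rw [abs_of_nonneg hnn, hcK, he1]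
    exact one_sub_exp_neg_div_antitone hxl (by nlinarith [hμ i])
  have hiprod : ⟪u1, u1⟫ = ⟪(NormedSpace.exp ((-x) • L)) u0, u1⟫
      + t * ⟪Φ Fv, u1⟫ - t * ((1 - r1 ^ 2) * ⟪Φ bv, u1⟫) := by
    nth_rewrite 1 [hu1]
    rw [inner_add_left, real_inner_smul_left, map_sub, map_smul, inner_sub_left,
      real_inner_smul_left]
    ring
  set p := Real.exp (-(t * γ)) with hpdef
  have hp0 : 0 < p := Real.exp_pos _
  have hp1 : p ≤ 1 := by
    rw [hpdef, Real.exp_le_one_iff]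
    nlinarith
  have hrlin : t * (1 - r1) * ⟪Φ bv, u1⟫ = r1 - p * r0 := by
    linarith [hr1]
  have hsq : ‖u1‖ ^ 2 = ⟪u1, u1⟫ := (real_inner_self_eq_norm_sq u1).symm
  have hiden : ‖u1‖ ^ 2 + (r1 + 1) ^ 2
      = ⟪(NormedSpace.exp ((-x) • L)) u0, u1⟫ + t * ⟪Φ Fv, u1⟫
        + p * (r1 + 1) * (r0 + 1) + (1 - p) * (r1 + 1) := by
    linear_combination hsq + hiprod - (1 + r1) * hrlin
  have hB1 : ⟪(NormedSpace.exp ((-x) • L)) u0, u1⟫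
      ≤ e1 / 2 * (‖u0‖ ^ 2 + ‖u1‖ ^ 2) := by
    have h1 := real_inner_le_norm ((NormedSpace.exp ((-x) • L)) u0) u1
    nlinarith [mul_le_mul_of_nonneg_right hEnorm (norm_nonneg u1),
      mul_nonneg hq0.le (sq_nonneg (‖u0‖ - ‖u1‖))]
  have hB2 : p * (r1 + 1) * (r0 + 1) ≤ p / 2 * ((r0 + 1) ^ 2 + (r1 + 1) ^ 2) := by
    nlinarith [mul_nonneg hp0.le (sq_nonneg (r1 - r0))]
  have hB3 : (1 - p) * (r1 + 1) ≤ (1 - p) / 2 * ((r1 + 1) ^ 2 + 1) := by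
    nlinarith [mul_nonneg (by linarith : (0:ℝ) ≤ 1 - p) (sq_nonneg r1)]
  have hB4 : t * ⟪Φ Fv, u1⟫ ≤ (1 - e1) * (M / (ν * lam1)) ^ 2 / 2
      + (1 - e1) / 2 * ‖u1‖ ^ 2 := by
    have h1 := real_inner_le_norm (Φ Fv) u1
    have h2 : ‖Φ Fv‖ ≤ cK * M :=
      le_trans hΦnorm (mul_le_mul_of_nonneg_left hFM hcK0)
    have h4 : t * cK = (1 - e1) / (ν * lam1) := by
      rw [hcK, hxdef]
      field_simp
    have h3 : t * ⟪Φ Fv, u1⟫ ≤ (1 - e1) / (ν * lam1) * (M * ‖u1‖) := by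
      have h6 : ⟪Φ Fv, u1⟫ ≤ cK * M * ‖u1‖ :=
        le_trans h1 (mul_le_mul_of_nonneg_right h2 (norm_nonneg u1))
      have h5 : t * ⟪Φ Fv, u1⟫ ≤ t * (cK * M * ‖u1‖) :=
        mul_le_mul_of_nonneg_left h6 ht.le
      calc t * ⟪Φ Fv, u1⟫ ≤ t * (cK * M * ‖u1‖) := h5
        _ = (1 - e1) / (ν * lam1) * (M * ‖u1‖) := by
            linear_combination M * ‖u1‖ * h4
    have hint := mul_nonneg (by linarith : (0:ℝ) ≤ 1 - e1)
      (sq_nonneg (M / (ν * lam1) - ‖u1‖))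
    have he' : (1 - e1) * (M / (ν * lam1) - ‖u1‖) ^ 2
        = (1 - e1) * (M / (ν * lam1)) ^ 2
          - 2 * ((1 - e1) / (ν * lam1) * (M * ‖u1‖)) + (1 - e1) * ‖u1‖ ^ 2 := by
      field_simp
      ring
    rw [he'] at hint
    linarith
  have hq2 : e1 ≤ Real.exp (-(θ * t)) := by
    rw [he1]
    apply Real.exp_le_exp.mpr
    nlinarith [mul_le_mul_of_nonneg_right hθ1 ht.le]
  have hp2 : p ≤ Real.exp (-(θ * t)) := by
    rw [hpdef]
    apply Real.exp_le_exp.mpr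
    nlinarith [mul_le_mul_of_nonneg_right hθ2 ht.le]
  have h1q : 1 - e1 ≤ x * lam1 := by
    rw [he1]
    linarith [Real.add_one_le_exp (-(x * lam1))]
  have h1p : 1 - p ≤ t * γ := by
    rw [hpdef]
    linarith [Real.add_one_le_exp (-(t * γ))]
  have hpos1 : (0:ℝ) ≤ (M / (ν * lam1)) ^ 2 := sq_nonneg _
  have hfrac : x * lam1 * (M / (ν * lam1)) ^ 2 = t * (M ^ 2 / (ν * lam1)) := by
    rw [hxdef]
    field_simp
  have hmain : ‖u1‖ ^ 2 + (r1 + 1) ^ 2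
      ≤ e1 * ‖u0‖ ^ 2 + p * (r0 + 1) ^ 2 + (1 - e1) * (M / (ν * lam1)) ^ 2
        + (1 - p) := by
    linarith [hiden, hB1, hB2, hB3, hB4]
  have hg1 : e1 * ‖u0‖ ^ 2 ≤ Real.exp (-(θ * t)) * ‖u0‖ ^ 2 :=
    mul_le_mul_of_nonneg_right hq2 (sq_nonneg _)
  have hg2 : p * (r0 + 1) ^ 2 ≤ Real.exp (-(θ * t)) * (r0 + 1) ^ 2 :=
    mul_le_mul_of_nonneg_right hp2 (sq_nonneg _)
  have hg3 : (1 - e1) * (M / (ν * lam1)) ^ 2 ≤ t * (M ^ 2 / (ν * lam1)) := by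
    calc (1 - e1) * (M / (ν * lam1)) ^ 2
        ≤ x * lam1 * (M / (ν * lam1)) ^ 2 :=
          mul_le_mul_of_nonneg_right h1q hpos1
      _ = t * (M ^ 2 / (ν * lam1)) := hfrac
  have hexpand : (M ^ 2 / (ν * lam1) + γ) * t
      = t * (M ^ 2 / (ν * lam1)) + t * γ := by ring
  rw [hexpand]
  linarith [hmain, hg1, hg2, hg3, h1p]

end Helpers

open Finset in
/-- Long-time stability of the variable-step ETD-mr-SAV scheme.
For each step, `φ (n+1)` plays the role of `φ₁(τ_{n+1} ν L)`, characterized by the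
defining identity `(τ_{n+1} ν) • (L ∘ φ (n+1)) = id - exp(-(τ_{n+1} ν) L)`
(which determines it uniquely since `L` is positive definite, hence bijective).
Empty sums are `0`. -/
theorem etd_mr_sav_variable_step_stability
    {V : Type*} [NormedAddCommGroup V] [InnerProductSpace ℝ V]
    [FiniteDimensional ℝ V] [Nontrivial V]
    (L : V →L[ℝ] V) (hL : IsSelfAdjoint L)
    (lam1 : ℝ) (hlam1 : 0 < lam1)
    (hLlow : ∀ h : V, lam1 * ‖h‖ ^ 2 ≤ ⟪L h, h⟫)
    (ν γ : ℝ) (hν : 0 < ν) (hγ : 0 < γ)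
    (θ : ℝ) (hθ : θ = min (ν * lam1) γ)
    (τ : ℕ → ℝ) (hτ : ∀ k, 2 ≤ k → 0 < τ k)
    (b F : ℕ → V) (M : ℝ) (hF : ∀ n, 1 ≤ n → ‖F n‖ ≤ M)
    (u : ℕ → V) (r : ℕ → ℝ)
    (φ : ℕ → (V →L[ℝ] V))
    (hφ : ∀ n, 1 ≤ n →
      (τ (n + 1) * ν) • (L ∘L φ (n + 1))
        = 1 - NormedSpace.exp (-(τ (n + 1) * ν) • L))
    (hu : ∀ n, 1 ≤ n →
      u (n + 1) = NormedSpace.exp (-(τ (n + 1) * ν) • L) (u n)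
        + τ (n + 1) • (φ (n + 1)) (F n - (1 - (r (n + 1)) ^ 2) • b n))
    (hr : ∀ n, 1 ≤ n →
      r (n + 1) = Real.exp (-(τ (n + 1) * γ)) * r n
        + τ (n + 1) * (1 - r (n + 1)) * ⟪(φ (n + 1)) (b n), u (n + 1)⟫) :
    ∀ n, 1 ≤ n →
      ‖u (n + 1)‖ ^ 2 + (r (n + 1) + 1) ^ 2
        ≤ Real.exp (-(θ * ∑ i ∈ Icc 1 n, τ (i + 1)))
              * (‖u 1‖ ^ 2 + (r 1 + 1) ^ 2)
          + (M ^ 2 / (ν * lam1) + γ)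
              * ∑ i ∈ Icc 1 n,
                  Real.exp (-(θ * ∑ j ∈ Icc (i + 1) n, τ (j + 1))) * τ (i + 1) := by
  have key : ∀ m, 1 ≤ m →
      ‖u (m + 1)‖ ^ 2 + (r (m + 1) + 1) ^ 2
        ≤ Real.exp (-(θ * τ (m + 1))) * (‖u m‖ ^ 2 + (r m + 1) ^ 2)
          + (M ^ 2 / (ν * lam1) + γ) * τ (m + 1) := by
    intro m hm
    exact etd_sav_step_bound L hL lam1 hlam1 hLlow ν γ θ hν hγ
      (hθ ▸ min_le_left _ _) (hθ ▸ min_le_right _ _)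
      (τ (m + 1)) (hτ (m + 1) (by omega)) (b m) (F m) M (hF m hm)
      (u m) (u (m + 1)) (r m) (r (m + 1)) (φ (m + 1))
      (hφ m hm) (hu m hm) (hr m hm)
  intro n hn
  induction n, hn using Nat.le_induction with
  | base =>
    have h := key 1 le_rfl
    simp only [Finset.Icc_self, Finset.sum_singleton]
    rw [Finset.Icc_eq_empty (by omega : ¬ (1 + 1 ≤ 1)), Finset.sum_empty]
    simpa using h
  | succ m hm ih =>
    have hk := key (m + 1) (by omega)
    have hEm : (0:ℝ) < Real.exp (-(θ * τ (m + 1 + 1))) := Real.exp_pos _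
    have hstep : ‖u (m + 1 + 1)‖ ^ 2 + (r (m + 1 + 1) + 1) ^ 2
        ≤ Real.exp (-(θ * τ (m + 1 + 1))) *
            (Real.exp (-(θ * ∑ i ∈ Icc 1 m, τ (i + 1))) * (‖u 1‖ ^ 2 + (r 1 + 1) ^ 2)
              + (M ^ 2 / (ν * lam1) + γ) * ∑ i ∈ Icc 1 m,
                  Real.exp (-(θ * ∑ j ∈ Icc (i + 1) m, τ (j + 1))) * τ (i + 1))
          + (M ^ 2 / (ν * lam1) + γ) * τ (m + 1 + 1) := by
      refine le_trans hk ?_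
      exact add_le_add_left (mul_le_mul_of_nonneg_left ih hEm.le) _
    refine le_trans hstep (le_of_eq ?_)
    have hA : ∑ i ∈ Icc 1 (m + 1), τ (i + 1)
        = (∑ i ∈ Icc 1 m, τ (i + 1)) + τ (m + 1 + 1) :=
      Finset.sum_Icc_succ_top (by omega) _
    have hB : ∑ i ∈ Icc 1 (m + 1),
          Real.exp (-(θ * ∑ j ∈ Icc (i + 1) (m + 1), τ (j + 1))) * τ (i + 1)
        = Real.exp (-(θ * τ (m + 1 + 1))) *
            (∑ i ∈ Icc 1 m,
              Real.exp (-(θ * ∑ j ∈ Icc (i + 1) m, τ (j + 1))) * τ (i + 1))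
          + τ (m + 1 + 1) := by
      rw [Finset.sum_Icc_succ_top (by omega : 1 ≤ m + 1)]
      rw [Finset.Icc_eq_empty (by omega : ¬ (m + 1 + 1 ≤ m + 1)), Finset.sum_empty]
      rw [Finset.mul_sum]
      congr 1
      · refine Finset.sum_congr rfl fun i hi => ?_
        have hi' : i ≤ m := (Finset.mem_Icc.mp hi).2
        rw [Finset.sum_Icc_succ_top (by omega : i + 1 ≤ m + 1)]
        rw [mul_add θ, neg_add, Real.exp_add]
        ring
      · simp
    rw [hA, hB]
    rw [mul_add θ, neg_add, Real.exp_add]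
    ring
end

section
/- Let V be a nontrivial finite-dimensional real inner product space, L : V → V a self-adjoint positive-definite endomorphism, and τ, ν > 0. Then for every h ∈ V, ⟨(φ₁(τνL))⁻¹ h, h⟩ ≥ τν·⟨L h, h⟩. -/
open scoped RealInnerProductSpace

open NormedSpace in
lemma exp_apply_eigenvector
    {V : Type*} [NormedAddCommGroup V] [InnerProductSpace ℝ V]
    [CompleteSpace V]
    (T : V →L[ℝ] V) (v : V) (c : ℝ) (hv : T v = c • v) :
    NormedSpace.exp T v = Real.exp c • v := by
  have hpow : ∀ n : ℕ, (T ^ n) v = c ^ n • v := by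
    intro n
    induction n with
    | zero => simp
    | succ n ih =>
      rw [pow_succ, pow_succ, ContinuousLinearMap.mul_apply, hv, map_smul, ih,
        smul_smul, mul_comm]
  have hs : Summable fun n : ℕ => ((Nat.factorial n : ℝ))⁻¹ • T ^ n := expSeries_summable' T
  have h1 : NormedSpace.exp T v = ∑' n : ℕ, (((Nat.factorial n : ℝ))⁻¹ • T ^ n) v := by
    rw [exp_eq_tsum ℝ]
    exact (ContinuousLinearMap.apply ℝ V v).map_tsum hs
  rw [h1]
  have h2 : ∀ n : ℕ, (((Nat.factorial n : ℝ))⁻¹ • T ^ n) v = (((Nat.factorial n : ℝ))⁻¹ • c ^ n) • v := by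
    intro n
    rw [ContinuousLinearMap.smul_apply, hpow, smul_smul, smul_eq_mul]
  simp_rw [h2]
  rw [(expSeries_summable' (𝕂 := ℝ) c).tsum_smul_const]
  congr 1
  rw [Real.exp_eq_exp_ℝ, exp_eq_tsum ℝ]

/-- Lower bound `⟨(φ₁(τνL))⁻¹ h, h⟩ ≥ τν⟨L h, h⟩`.
`φ` plays the role of `φ₁(τνL)`, characterized by the defining identity
`(τν) • (L ∘ φ) = id - exp(-(τν)L)`, and `ψ` is its inverse. -/
theorem phi1_inv_op_lower_bound
    {V : Type*} [NormedAddCommGroup V] [InnerProductSpace ℝ V]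
    [FiniteDimensional ℝ V] [Nontrivial V]
    (L : V →L[ℝ] V) (hL : IsSelfAdjoint L)
    (hLpos : ∀ h : V, h ≠ 0 → 0 < ⟪L h, h⟫)
    (τ ν : ℝ) (hτ : 0 < τ) (hν : 0 < ν)
    (φ ψ : V →L[ℝ] V)
    (hφ : (τ * ν) • (L ∘L φ) = 1 - NormedSpace.exp (-(τ * ν) • L))
    (hψ₁ : φ ∘L ψ = 1) (hψ₂ : ψ ∘L φ = 1) :
    ∀ h : V, τ * ν * ⟪L h, h⟫ ≤ ⟪ψ h, h⟫ := by
  intro h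
  have hτν : 0 < τ * ν := mul_pos hτ hν
  -- spectral data
  set n := Module.finrank ℝ V with hn_def
  have hn : Module.finrank ℝ V = n := rfl
  have hsym : (L : V →ₗ[ℝ] V).IsSymmetric := hL.isSymmetric
  set b := hsym.eigenvectorBasis hn with hb
  set μ := hsym.eigenvalues hn with hμ
  have hbi : ∀ i, L (b i) = μ i • b i := fun i => hsym.apply_eigenvectorBasis hn i
  have hbne : ∀ i, (b i : V) ≠ 0 := fun i => b.toBasis.ne_zero i
  have hμpos : ∀ i, 0 < μ i := by
    intro i
    have := hLpos (b i) (hbne i)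
    rw [hbi i, real_inner_smul_left, real_inner_self_eq_norm_sq, b.orthonormal.1 i] at this
    simpa using this
  -- L is injective
  have hLinj : Function.Injective L := by
    intro x y hxy
    by_contra hne
    have hx : x - y ≠ 0 := sub_ne_zero.mpr hne
    have := hLpos (x - y) hx
    rw [map_sub, hxy, sub_self] at this
    simp at this
  -- eigenvalues of exp
  set x : Fin n → ℝ := fun i => τ * ν * μ i with hx_def
  have hxpos : ∀ i, 0 < x i := fun i => mul_pos hτν (hμpos i)
  have hexp : ∀ i, NormedSpace.exp (-(τ * ν) • L) (b i) = Real.exp (-(x i)) • b i := by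
    intro i
    apply exp_apply_eigenvector
    rw [ContinuousLinearMap.smul_apply, hbi i, smul_smul]
    congr 1
    simp only [hx_def]
    ring
  -- φ is diagonal
  set c : Fin n → ℝ := fun i => (1 - Real.exp (-(x i))) / x i with hc_def
  have hcpos : ∀ i, 0 < c i := by
    intro i
    apply div_pos _ (hxpos i)
    have : Real.exp (-(x i)) < 1 := by
      rw [Real.exp_lt_one_iff]
      linarith [hxpos i]
    linarith
  have hcx : ∀ i, c i * x i = 1 - Real.exp (-(x i)) := by
    intro i
    simp only [hc_def]
    exact div_mul_cancel₀ _ (hxpos i).ne'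
  have hφb : ∀ i, φ (b i) = c i • b i := by
    intro i
    have h1 : ((τ * ν) • (L ∘L φ)) (b i) = (1 - NormedSpace.exp (-(τ * ν) • L)) (b i) := by
      rw [hφ]
    rw [ContinuousLinearMap.smul_apply, ContinuousLinearMap.comp_apply] at h1
    rw [ContinuousLinearMap.sub_apply, ContinuousLinearMap.one_apply, hexp i] at h1
    have h2 : (τ * ν) • L (φ (b i)) = (1 - Real.exp (-(x i))) • b i := by
      rw [h1, sub_smul, one_smul]
    have h3 : (τ * ν) • L (c i • b i) = (1 - Real.exp (-(x i))) • b i := by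
      rw [map_smul, hbi i, smul_smul, smul_smul, ← hcx i]
      congr 1
      simp only [hx_def]
      ring
    have h4 : L (φ (b i)) = L (c i • b i) := by
      have := h2.trans h3.symm
      exact smul_right_injective V (ne_of_gt hτν) this
    exact hLinj h4
  -- ψ is diagonal
  have hψb : ∀ i, ψ (b i) = (c i)⁻¹ • b i := by
    intro i
    have h1 : φ ((c i)⁻¹ • b i) = b i := by
      rw [map_smul, hφb i, smul_smul, inv_mul_cancel₀ (ne_of_gt (hcpos i)), one_smul]
    calc ψ (b i) = ψ (φ ((c i)⁻¹ • b i)) := by rw [h1]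
      _ = (ψ ∘L φ) ((c i)⁻¹ • b i) := rfl
      _ = (c i)⁻¹ • b i := by rw [hψ₂]; rfl
  -- diagonal entries of ψ - τν L are nonneg
  set d : Fin n → ℝ := fun i => (c i)⁻¹ - τ * ν * μ i with hd_def
  have hdpos : ∀ i, 0 ≤ d i := by
    intro i
    have hle : c i * x i ≤ 1 := by
      rw [hcx i]
      have := Real.exp_pos (-(x i))
      linarith
    have hxle : x i ≤ (c i)⁻¹ := by
      rw [← mul_le_mul_iff_right₀ (hcpos i), mul_inv_cancel₀ (hcpos i).ne']
      exact hle
    simp only [hx_def] at hxle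
    simp only [hd_def]
    linarith
  -- the operator D := ψ - (τν) • L
  set D : V →L[ℝ] V := ψ - (τ * ν) • L with hD_def
  have hDb : ∀ i, D (b i) = d i • b i := by
    intro i
    rw [hD_def, ContinuousLinearMap.sub_apply, ContinuousLinearMap.smul_apply, hψb i,
      hbi i, hd_def, smul_smul, sub_smul]
  -- expand h in the basis
  have hkey : 0 ≤ ⟪D h, h⟫ := by
    have hrepr : ∑ i, b.repr h i • b i = h := b.sum_repr h
    have : D h = ∑ i, (b.repr h i * d i) • b i := by
      conv_lhs => rw [← hrepr]
      rw [map_sum]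
      congr 1
      ext i
      rw [map_smul, hDb i, smul_smul]
    rw [this, sum_inner]
    apply Finset.sum_nonneg
    intro i _
    rw [real_inner_smul_left, ← b.repr_apply_apply]
    have : b.repr h i * d i * b.repr h i = d i * (b.repr h i)^2 := by ring
    rw [this]
    exact mul_nonneg (hdpos i) (sq_nonneg _)
  have hexpand : ⟪D h, h⟫ = ⟪ψ h, h⟫ - τ * ν * ⟪L h, h⟫ := by
    rw [hD_def, ContinuousLinearMap.sub_apply, ContinuousLinearMap.smul_apply,
      inner_sub_left, real_inner_smul_left]
  linarith [hkey, hexpand.symm.le]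
end

section
/- Let A, B, C be real numbers with B > 0 and 1 + A - (4/3)·B > 0, and define g(r) = B·r³ - B·r² + (1 + A - B)·r - (A - B + C). Then g is strictly monotone increasing on ℝ and has exactly one real root, i.e. there exists a unique r ∈ ℝ with g(r) = 0. -/
/-- If `B > 0` and `1 + A - (4/3)B > 0`, the cubic
`g(r) = B r³ - B r² + (1 + A - B) r - (A - B + C)` is strictly increasing on `ℝ`
and has exactly one real root. -/
theorem cubic_sav_strictMono_and_unique_root
    (A B C : ℝ) (hB : 0 < B) (hcoef : 0 < 1 + A - 4 / 3 * B) :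
    StrictMono (fun r : ℝ => B * r ^ 3 - B * r ^ 2 + (1 + A - B) * r - (A - B + C)) ∧
    ∃! r : ℝ, B * r ^ 3 - B * r ^ 2 + (1 + A - B) * r - (A - B + C) = 0 := by
  set K := A - B + C with hK
  set f : ℝ → ℝ := fun r => B * r ^ 3 - B * r ^ 2 + (1 + A - B) * r - K with hf
  have hder : ∀ x : ℝ, HasDerivAt f (B * (3 * x ^ 2) - B * (2 * x) + (1 + A - B)) x := by
    intro x
    have h1 : HasDerivAt (fun r : ℝ => B * r ^ 3) (B * (3 * x ^ 2)) x := by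
      simpa using ((hasDerivAt_pow 3 x).const_mul B)
    have h2 : HasDerivAt (fun r : ℝ => B * r ^ 2) (B * (2 * x)) x := by
      simpa using ((hasDerivAt_pow 2 x).const_mul B)
    have h3 : HasDerivAt (fun r : ℝ => (1 + A - B) * r) (1 + A - B) x := by
      simpa using (hasDerivAt_id x).const_mul (1 + A - B)
    exact ((h1.sub h2).add h3).sub_const K
  have hsq : ∀ x : ℝ, 0 ≤ 3 * B * (x - 1/3)^2 := fun x => by positivity
  have hpos : ∀ x : ℝ, 0 < B * (3 * x ^ 2) - B * (2 * x) + (1 + A - B) := by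
    intro x
    have h1 := hsq x
    nlinarith [hsq x]
  have hmono : StrictMono f := by
    apply strictMono_of_deriv_pos
    intro x
    rw [(hder x).deriv]
    exact hpos x
  refine ⟨hmono, ?_⟩
  -- h x := f x - c x is monotone, where c := 1 + A - 4/3 B
  set c : ℝ := 1 + A - 4 / 3 * B with hc
  have hcpos : 0 < c := hcoef
  set h : ℝ → ℝ := fun x => f x - c * x with hh
  have hhder : ∀ x : ℝ, HasDerivAt h (3 * B * (x - 1/3)^2) x := by
    intro x
    have hd := (hder x).sub ((hasDerivAt_id x).const_mul c)
    simp only [mul_one] at hd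
    have heq : B * (3 * x ^ 2) - B * (2 * x) + (1 + A - B) - c = 3 * B * (x - 1/3)^2 := by
      rw [hc]; ring
    rw [heq] at hd
    exact hd
  have hhmono : Monotone h := by
    apply monotone_of_deriv_nonneg
    · exact fun x => (hhder x).differentiableAt
    · intro x
      rw [(hhder x).deriv]
      exact hsq x
  have h0 : h 0 = f 0 := by simp [hh]
  have hfb : ∀ x : ℝ, 0 ≤ x → f 0 + c * x ≤ f x := by
    intro x hx
    have h2 := hhmono hx
    simp only [hh, h0] at h2 ⊢
    linarith [h2]
  have hfa : ∀ x : ℝ, x ≤ 0 → f x ≤ f 0 + c * x := by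
    intro x hx
    have h2 := hhmono hx
    simp only [hh] at h2
    linarith [h2]
  set b : ℝ := (1 + |f 0|) / c with hb
  have hbpos : 0 < b := by positivity
  have hcb : c * b = 1 + |f 0| := by
    rw [hb]; field_simp
  have hfbpos : 0 < f b := by
    have h1 := hfb b hbpos.le
    rw [hcb] at h1
    have := neg_abs_le (f 0)
    linarith
  have hfaneg : f (-b) < 0 := by
    have h1 := hfa (-b) (by linarith)
    have h2 : c * -b = -(1 + |f 0|) := by rw [mul_neg, hcb]
    rw [h2] at h1
    have := le_abs_self (f 0)
    linarith
  have hcont : Continuous f := by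
    rw [hf]
    exact ((((continuous_const.mul (continuous_pow 3)).sub
      (continuous_const.mul (continuous_pow 2))).add
      (continuous_const.mul continuous_id)).sub continuous_const)
  obtain ⟨r, _, hr0⟩ := intermediate_value_Icc (by linarith : (-b : ℝ) ≤ b)
    hcont.continuousOn (Set.mem_Icc.mpr ⟨hfaneg.le, hfbpos.le⟩)
  exact ⟨r, hr0, fun y hy => hmono.injective (hy.trans hr0.symm)⟩
end

section
/- Let θ > 0, n ≥ 1, and let τ₁, …, τ_n be positive real numbers with τ_i ≤ τ_max for all i. Then Σ_{i=1}^{n} exp(-θ·Σ_{j=i+1}^{n} τ_j)·τ_i ≤ (1 + θ·τ_max)·(1 - exp(-θ·Σ_{j=1}^{n} τ_j))/θ; in particular this sum is at most (1 + θ·τ_max)/θ, uniformly in n. -/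
open Finset in
lemma telescope_Icc (F : ℕ → ℝ) (n : ℕ) :
    ∑ i ∈ Icc 1 n, (F (i + 1) - F i) = F (n + 1) - F 1 := by
  induction n with
  | zero => simp
  | succ m ih =>
    rw [Finset.sum_Icc_succ_top (by omega), ih]
    ring

open Finset in
/-- Weighted sum bound from the variable-step stability analysis: for positive steps
`τ₁, …, τₙ ≤ τmax`,
`Σ_{i=1}^n exp(-θ Σ_{j=i+1}^n τ_j) τ_i ≤ (1 + θ τmax)(1 - exp(-θ Σ_{j=1}^n τ_j))/θ`,
and in particular the sum is at most `(1 + θ τmax)/θ`. Empty sums are `0`. -/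
theorem weighted_exp_sum_bound
    (θ τmax : ℝ) (hθ : 0 < θ) (n : ℕ) (hn : 1 ≤ n)
    (τ : ℕ → ℝ) (hτpos : ∀ i, 1 ≤ i → i ≤ n → 0 < τ i)
    (hτmax : ∀ i, 1 ≤ i → i ≤ n → τ i ≤ τmax) :
    (∑ i ∈ Icc 1 n, Real.exp (-(θ * ∑ j ∈ Icc (i + 1) n, τ j)) * τ i
        ≤ (1 + θ * τmax) * (1 - Real.exp (-(θ * ∑ j ∈ Icc 1 n, τ j))) / θ) ∧
    (∑ i ∈ Icc 1 n, Real.exp (-(θ * ∑ j ∈ Icc (i + 1) n, τ j)) * τ i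
        ≤ (1 + θ * τmax) / θ) := by
  have hτmax0 : 0 < τmax := lt_of_lt_of_le (hτpos 1 le_rfl hn) (hτmax 1 le_rfl hn)
  set S : ℕ → ℝ := fun i => ∑ j ∈ Icc i n, τ j with hS
  set F : ℕ → ℝ := fun i => Real.exp (-(θ * S i)) with hF
  have key : ∀ i ∈ Icc 1 n,
      Real.exp (-(θ * S (i + 1))) * τ i ≤ (1 + θ * τmax) / θ * (F (i + 1) - F i) := by
    intro i hi
    rw [Finset.mem_Icc] at hi
    have hSi : S i = τ i + S (i + 1) := by
      have hc : Finset.Icc i n = Finset.cons i (Ioc i n) (by simp) :=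
        Finset.Icc_eq_cons_Ioc hi.2
      simp only [hS, hc, Finset.sum_cons]
      congr 1
      rw [← Finset.Icc_add_one_left_eq_Ioc]
    have hτi : 0 < τ i := hτpos i hi.1 hi.2
    have hτim : τ i ≤ τmax := hτmax i hi.1 hi.2
    have hFi : F i = Real.exp (-(θ * τ i)) * Real.exp (-(θ * S (i + 1))) := by
      simp only [hF, hSi, ← Real.exp_add]
      ring_nf
    rw [hFi]
    set a := Real.exp (-(θ * S (i + 1))) with ha
    have hapos : 0 < a := Real.exp_pos _
    have hz : 0 < θ * τ i := mul_pos hθ hτi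
    have hpos1 : (0:ℝ) < 1 + θ * τ i := by linarith
    have hexp : Real.exp (-(θ * τ i)) ≤ 1 / (1 + θ * τ i) := by
      rw [Real.exp_neg, one_div]
      exact inv_anti₀ hpos1 (by linarith [Real.add_one_le_exp (θ * τ i)])
    have hstep : τ i ≤ (1 + θ * τmax) / θ * (1 - Real.exp (-(θ * τ i))) := by
      have h1 : 1 - Real.exp (-(θ * τ i)) ≥ (θ * τ i) / (1 + θ * τ i) := by
        have h2 : (1:ℝ) / (1 + θ * τ i) = 1 - (θ * τ i) / (1 + θ * τ i) := by
          field_simp; ring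
        linarith [h2 ▸ hexp]
      have h3 : (1 + θ * τ i) / θ * ((θ * τ i) / (1 + θ * τ i)) = τ i := by
        field_simp
      have h4 : (1 + θ * τ i) / θ ≤ (1 + θ * τmax) / θ := by
        gcongr
      have hnn : (0:ℝ) ≤ 1 - Real.exp (-(θ * τ i)) := by
        have := div_pos hz hpos1
        linarith
      have hint1 := mul_le_mul_of_nonneg_left h1 (div_pos hpos1 hθ).le
      have hint2 := mul_le_mul_of_nonneg_right h4 hnn
      linarith [h3 ▸ hint1]
    calc a * τ i ≤ a * ((1 + θ * τmax) / θ * (1 - Real.exp (-(θ * τ i)))) :=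
          mul_le_mul_of_nonneg_left hstep hapos.le
      _ = (1 + θ * τmax) / θ * (a - Real.exp (-(θ * τ i)) * a) := by ring
  have hsum := Finset.sum_le_sum key
  rw [← Finset.mul_sum, telescope_Icc F n] at hsum
  have hFn1 : F (n + 1) = 1 := by
    simp [hF, hS, Finset.Icc_eq_empty_of_lt (Nat.lt_succ_self n)]
  have hF1 : F 1 = Real.exp (-(θ * ∑ j ∈ Icc 1 n, τ j)) := rfl
  rw [hFn1, hF1] at hsum
  constructor
  · calc _ ≤ _ := hsum
      _ = (1 + θ * τmax) * (1 - Real.exp (-(θ * ∑ j ∈ Icc 1 n, τ j))) / θ := by ring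
  · refine hsum.trans ?_
    have : (1:ℝ) - Real.exp (-(θ * ∑ j ∈ Icc 1 n, τ j)) ≤ 1 := by
      linarith [Real.exp_pos (-(θ * ∑ j ∈ Icc 1 n, τ j))]
    have hc : (0:ℝ) ≤ (1 + θ * τmax) / θ := by positivity
    nlinarith
end

section
/- Let τ > 0 and let h, g : ℝ → ℝ be such that h is continuously differentiable on [0, τ] with |h(s)| ≤ M₀ and |h'(s)| ≤ M₁ for all s ∈ [0, τ], and g is twice continuously differentiable on [0, τ] with |g'(s)| ≤ N₁ and |g''(s)| ≤ N₂ for all s ∈ [0, τ]. Then |∫₀^τ h(s)·(g(s) - g(τ/2)) ds| ≤ (M₁·N₁/12 + M₀·N₂/24)·τ³. -/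
/-!
Write `m = τ / 2`. Taylor's bound `|g s - g m - (s - m) g'(m)| ≤ N₂ (s - m)² / 2` and the
Lipschitz bound `|h s - h m| ≤ M₁ |s - m|` show that the integrand `h s (g s - g m)` differs from
the linear function `h(m) g'(m) (s - m)` by at most `(M₁ N₁ + M₀ N₂ / 2) (s - m)²`. The linear
function integrates to zero over an interval centred at `m`, and `∫₀^τ (s - m)² ds = τ³ / 12`.
-/

open Set intervalIntegral

section MeanValue

variable {E : Type*} [NormedAddCommGroup E] [NormedSpace ℝ E]

theorem norm_image_sub_le_of_norm_deriv_le_deriv_boundary {f f' : ℝ → E} {B B' : ℝ → ℝ}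
    {a b : ℝ} (hf : ∀ t ∈ Icc a b, HasDerivWithinAt f (f' t) (Icc a b) t)
    (hB : ∀ t, HasDerivAt B (B' t) t) (bound : ∀ t ∈ Ico a b, ‖f' t‖ ≤ B' t) :
    ∀ x ∈ Icc a b, ‖f x - f a‖ ≤ B x - B a :=
  image_norm_le_of_norm_deriv_right_le_deriv_boundary
    (fun t ht => ((hf t ht).sub_const (f a)).continuousWithinAt)
    (fun t ht => ((hf t (Ico_subset_Icc_self ht)).sub_const (f a)).mono_of_mem_nhdsWithin
      (Icc_mem_nhdsGE_of_mem ht))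
    (by simp) (fun t => (hB t).sub_const (B a)) bound

theorem Convex.norm_image_sub_sub_smul_le {f f' f'' : ℝ → E} {s : Set ℝ} {C x y : ℝ}
    (hs : Convex ℝ s) (hf : ∀ t ∈ s, HasDerivWithinAt f (f' t) s t)
    (hf' : ∀ t ∈ s, HasDerivWithinAt f' (f'' t) s t) (bound : ∀ t ∈ s, ‖f'' t‖ ≤ C)
    (hx : x ∈ s) (hy : y ∈ s) :
    ‖f y - f x - (y - x) • f' x‖ ≤ C / 2 * (y - x) ^ 2 := by
  -- `F t` is the first-order Taylor polynomial of `f` at `t`, evaluated at `y`.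
  set F : ℝ → E := fun t => f t + (y - t) • f' t
  have hF : ∀ t ∈ s, HasDerivWithinAt F ((y - t) • f'' t) s t := fun t ht =>
    ((hf t ht).add (((hasDerivWithinAt_id t s).const_sub y).smul (hf' t ht))).congr_deriv
      (by simp)
  have hFxy : f y - f x - (y - x) • f' x = F y - F x := by
    simp only [F, sub_self, zero_smul, add_zero]; abel
  have hF'_le : ∀ t ∈ s, ‖(y - t) • f'' t‖ ≤ C * |y - t| := fun t ht => by
    rw [norm_smul, Real.norm_eq_abs, mul_comm]
    exact mul_le_mul_of_nonneg_right (bound t ht) (abs_nonneg _)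
  have hsub : ∀ {a b}, a ∈ s → b ∈ s → Icc a b ⊆ s := fun ha hb => hs.ordConnected.out ha hb
  rw [hFxy]
  rcases le_total x y with hxy | hyx
  · have hB : ∀ t, HasDerivAt (fun t => -(C / 2 * (y - t) ^ 2)) (C * (y - t)) t := fun t =>
      ((((hasDerivAt_id' t).const_sub y).pow 2).const_mul (C / 2)).neg.congr_deriv (by ring)
    have := norm_image_sub_le_of_norm_deriv_le_deriv_boundary
      (fun t ht => (hF t (hsub hx hy ht)).mono (hsub hx hy)) hB
      (fun t ht => (hF'_le t (hsub hx hy (Ico_subset_Icc_self ht))).trans_eq <| by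
        rw [abs_of_nonneg (by linarith [ht.2])])
      y ⟨hxy, le_rfl⟩
    linarith
  · have hB : ∀ t, HasDerivAt (fun t => C / 2 * (t - y) ^ 2) (C * (t - y)) t := fun t =>
      ((((hasDerivAt_id' t).sub_const y).pow 2).const_mul (C / 2)).congr_deriv (by ring)
    have := norm_image_sub_le_of_norm_deriv_le_deriv_boundary
      (fun t ht => (hF t (hsub hy hx ht)).mono (hsub hy hx)) hB
      (fun t ht => (hF'_le t (hsub hy hx (Ico_subset_Icc_self ht))).trans_eq <| by
        rw [abs_sub_comm, abs_of_nonneg (by linarith [ht.1])])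
      x ⟨hyx, le_rfl⟩
    rw [norm_sub_rev]
    linarith [sq_abs (x - y), sq_abs (y - x), abs_sub_comm x y]

end MeanValue

theorem abs_mul_sub_sub_mul_le {h g g' : ℝ → ℝ} {s m M₀ M₁ N₁ N₂ : ℝ}
    (hh : |h s - h m| ≤ M₁ * |s - m|) (hM₀ : |h s| ≤ M₀) (hN₁ : |g' m| ≤ N₁)
    (hg : |g s - g m - (s - m) * g' m| ≤ N₂ / 2 * (s - m) ^ 2) :
    |h s * (g s - g m) - h m * g' m * (s - m)| ≤ (M₁ * N₁ + M₀ * N₂ / 2) * (s - m) ^ 2 := by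
  have hsplit : h s * (g s - g m) - h m * g' m * (s - m)
      = (h s - h m) * (g' m * (s - m)) + h s * (g s - g m - (s - m) * g' m) := by ring
  calc |h s * (g s - g m) - h m * g' m * (s - m)|
      ≤ |h s - h m| * (|g' m| * |s - m|) + |h s| * |g s - g m - (s - m) * g' m| := by
        rw [hsplit, ← abs_mul, ← abs_mul, ← abs_mul]; exact abs_add_le _ _
    _ ≤ M₁ * |s - m| * (N₁ * |s - m|) + M₀ * (N₂ / 2 * (s - m) ^ 2) := by
        gcongr
        · exact (abs_nonneg _).trans hh
        · exact (abs_nonneg _).trans hM₀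
    _ = (M₁ * N₁ + M₀ * N₂ / 2) * (s - m) ^ 2 := by rw [← sq_abs (s - m)]; ring

theorem abs_integral_le_of_abs_sub_linear_le {φ : ℝ → ℝ} {a b c C : ℝ} (hab : a ≤ b)
    (hφ : IntervalIntegrable φ MeasureTheory.volume a b)
    (hbound : ∀ s ∈ Icc a b, |φ s - c * (s - (a + b) / 2)| ≤ C * (s - (a + b) / 2) ^ 2) :
    |∫ s in a..b, φ s| ≤ C * (b - a) ^ 3 / 12 := by
  have hlin : ∫ s in a..b, c * (s - (a + b) / 2) = 0 := by
    rw [integral_const_mul, integral_comp_sub_right (fun x => x), integral_id]; ring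
  have hsq : ∫ s in a..b, C * (s - (a + b) / 2) ^ 2 = C * (b - a) ^ 3 / 12 := by
    rw [integral_const_mul, integral_comp_sub_right (fun x => x ^ 2), integral_pow]; ring
  calc |∫ s in a..b, φ s| = |∫ s in a..b, (φ s - c * (s - (a + b) / 2))| := by
        rw [integral_sub hφ (Continuous.intervalIntegrable (by fun_prop) _ _), hlin, sub_zero]
    _ ≤ ∫ s in a..b, C * (s - (a + b) / 2) ^ 2 :=
        norm_integral_le_of_norm_le (f := fun s => φ s - c * (s - (a + b) / 2)) hab
          (MeasureTheory.ae_of_all _ fun s hs => hbound s (Ioc_subset_Icc_self hs))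
          ((by fun_prop : Continuous fun s => C * (s - (a + b) / 2) ^ 2).intervalIntegrable _ _)
    _ = C * (b - a) ^ 3 / 12 := hsq

theorem midpoint_quadrature_estimate_general
    (τ M₀ M₁ N₁ N₂ : ℝ) (hτ : 0 < τ)
    (h g h' g' g'' : ℝ → ℝ)
    (hh : ∀ s ∈ Set.Icc (0 : ℝ) τ, HasDerivWithinAt h (h' s) (Set.Icc 0 τ) s)
    (hhM₀ : ∀ s ∈ Set.Icc (0 : ℝ) τ, |h s| ≤ M₀)
    (hhM₁ : ∀ s ∈ Set.Icc (0 : ℝ) τ, |h' s| ≤ M₁)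
    (hg : ∀ s ∈ Set.Icc (0 : ℝ) τ, HasDerivWithinAt g (g' s) (Set.Icc 0 τ) s)
    (hg' : ∀ s ∈ Set.Icc (0 : ℝ) τ, HasDerivWithinAt g' (g'' s) (Set.Icc 0 τ) s)
    (hgN₁ : ∀ s ∈ Set.Icc (0 : ℝ) τ, |g' s| ≤ N₁)
    (hgN₂ : ∀ s ∈ Set.Icc (0 : ℝ) τ, |g'' s| ≤ N₂) :
    |∫ s in (0 : ℝ)..τ, h s * (g s - g (τ / 2))|
      ≤ (M₁ * N₁ / 12 + M₀ * N₂ / 24) * τ ^ 3 := by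
  have hm : τ / 2 ∈ Icc 0 τ := ⟨by linarith, by linarith⟩
  have hcont : ContinuousOn (fun s => h s * (g s - g (τ / 2))) (Icc 0 τ) :=
    (HasDerivWithinAt.continuousOn hh).mul
      ((HasDerivWithinAt.continuousOn hg).sub continuousOn_const)
  have hpointwise : ∀ s ∈ Icc 0 τ,
      |h s * (g s - g (τ / 2)) - h (τ / 2) * g' (τ / 2) * (s - τ / 2)|
        ≤ (M₁ * N₁ + M₀ * N₂ / 2) * (s - τ / 2) ^ 2 := fun s hs =>
    abs_mul_sub_sub_mul_le
      ((convex_Icc 0 τ).norm_image_sub_le_of_norm_hasDerivWithin_le hh hhM₁ hm hs)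
      (hhM₀ s hs) (hgN₁ _ hm) ((convex_Icc 0 τ).norm_image_sub_sub_smul_le hg hg' hgN₂ hm hs)
  have := abs_integral_le_of_abs_sub_linear_le hτ.le (hcont.intervalIntegrable_of_Icc hτ.le)
    (by simpa only [zero_add] using hpointwise)
  linarith

/-- Midpoint quadrature estimate: if `h` is `C¹` on `[0, τ]` with `|h| ≤ M₀`,
`|h'| ≤ M₁`, and `g` is `C²` on `[0, τ]` with `|g'| ≤ N₁`, `|g''| ≤ N₂`, then
`|∫₀^τ h(s)(g(s) - g(τ/2)) ds| ≤ (M₁N₁/12 + M₀N₂/24) τ³`. -/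
theorem midpoint_quadrature_estimate
    (τ M₀ M₁ N₁ N₂ : ℝ) (hτ : 0 < τ)
    (h g h' g' g'' : ℝ → ℝ)
    (hh : ∀ s ∈ Set.Icc (0 : ℝ) τ, HasDerivWithinAt h (h' s) (Set.Icc 0 τ) s)
    (hh'c : ContinuousOn h' (Set.Icc 0 τ))
    (hhM₀ : ∀ s ∈ Set.Icc (0 : ℝ) τ, |h s| ≤ M₀)
    (hhM₁ : ∀ s ∈ Set.Icc (0 : ℝ) τ, |h' s| ≤ M₁)
    (hg : ∀ s ∈ Set.Icc (0 : ℝ) τ, HasDerivWithinAt g (g' s) (Set.Icc 0 τ) s)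
    (hg' : ∀ s ∈ Set.Icc (0 : ℝ) τ, HasDerivWithinAt g' (g'' s) (Set.Icc 0 τ) s)
    (hg''c : ContinuousOn g'' (Set.Icc 0 τ))
    (hgN₁ : ∀ s ∈ Set.Icc (0 : ℝ) τ, |g' s| ≤ N₁)
    (hgN₂ : ∀ s ∈ Set.Icc (0 : ℝ) τ, |g'' s| ≤ N₂) :
    |∫ s in (0 : ℝ)..τ, h s * (g s - g (τ / 2))|
      ≤ (M₁ * N₁ / 12 + M₀ * N₂ / 24) * τ ^ 3 :=
  midpoint_quadrature_estimate_general τ M₀ M₁ N₁ N₂ hτ h g h' g' g'' hh hhM₀ hhM₁ hg hg' hgN₁ hgN₂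
end

section
/- Let V be a nontrivial finite-dimensional real inner product space, let L : V → V be a self-adjoint linear endomorphism with ⟨L h, h⟩ ≥ 0 for all h ∈ V, and let τ > 0. Let g : ℝ → V be twice continuously differentiable on [0, τ] with ‖g'(s)‖ ≤ N₁ and ‖g''(s)‖ ≤ N₂ for all s ∈ [0, τ]. Then ‖∫₀^τ exp(-(τ - s)L)·(g(s) - g(τ/2)) ds‖ ≤ (‖L‖·N₁/12 + N₂/24)·τ³, where ‖L‖ denotes the operator norm of L and exp(-(τ-s)L) the exponential of the endomorphism -(τ-s)L. -/
open scoped RealInnerProductSpace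

open NormedSpace Set intervalIntegral MeasureTheory

private lemma aux_exp_contraction {V : Type*} [NormedAddCommGroup V] [InnerProductSpace ℝ V]
    [FiniteDimensional ℝ V]
    (L : V →L[ℝ] V) (hLnonneg : ∀ h : V, 0 ≤ ⟪L h, h⟫)
    {t : ℝ} (ht : 0 ≤ t) : ‖NormedSpace.exp (t • (-L))‖ ≤ 1 := by
  refine ContinuousLinearMap.opNorm_le_bound _ zero_le_one fun v => ?_
  rw [one_mul]
  set u : ℝ → V := fun r => NormedSpace.exp (r • (-L)) v with hu
  have hderiv : ∀ r : ℝ, HasDerivAt u (-(L (u r))) r := fun r => by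
    have h1 : HasDerivAt (fun r : ℝ => NormedSpace.exp (r • (-L)))
        ((-L) * NormedSpace.exp (r • (-L))) r := hasDerivAt_exp_smul_const' (-L) r
    simpa [u, ContinuousLinearMap.mul_apply] using h1.clm_apply (hasDerivAt_const r v)
  set φ : ℝ → ℝ := fun r => ⟪u r, u r⟫ with hφ
  have hφd : ∀ r : ℝ, HasDerivAt φ (⟪u r, -(L (u r))⟫ + ⟪-(L (u r)), u r⟫) r :=
    fun r => HasDerivAt.inner ℝ (hderiv r) (hderiv r)
  have key : φ t ≤ φ 0 := by
    have hd : ∀ r ∈ interior (Icc (0:ℝ) t), deriv φ r ≤ 0 := by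
      intro r _
      rw [(hφd r).deriv]
      have h1 : ⟪u r, -(L (u r))⟫ ≤ 0 := by
        rw [real_inner_comm, inner_neg_left]; linarith [hLnonneg (u r)]
      have h2 : ⟪-(L (u r)), u r⟫ ≤ 0 := by
        rw [inner_neg_left]; linarith [hLnonneg (u r)]
      linarith
    have hc : ContinuousOn φ (Icc 0 t) := fun r _ => ((hφd r).continuousAt).continuousWithinAt
    have hdiff : DifferentiableOn ℝ φ (interior (Icc 0 t)) :=
      fun r _ => ((hφd r).differentiableAt).differentiableWithinAt
    exact antitoneOn_of_deriv_nonpos (convex_Icc 0 t) hc hdiff hd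
      (left_mem_Icc.2 ht) (right_mem_Icc.2 ht) ht
  have h0 : φ 0 = ‖v‖ ^ 2 := by
    simp [φ, u, zero_smul, NormedSpace.exp_zero, real_inner_self_eq_norm_sq]
  have ht' : φ t = ‖u t‖ ^ 2 := real_inner_self_eq_norm_sq _
  show ‖u t‖ ≤ ‖v‖
  nlinarith [norm_nonneg (u t), norm_nonneg v]

private lemma aux_exp_lipschitz {V : Type*} [NormedAddCommGroup V] [InnerProductSpace ℝ V]
    [FiniteDimensional ℝ V]
    (L : V →L[ℝ] V) (hLnonneg : ∀ h : V, 0 ≤ ⟪L h, h⟫)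
    {a b : ℝ} (ha : 0 ≤ a) (hb : 0 ≤ b) :
    ‖NormedSpace.exp (a • (-L)) - NormedSpace.exp (b • (-L))‖ ≤ ‖L‖ * |a - b| := by
  have H := Convex.norm_image_sub_le_of_norm_hasDerivWithin_le
    (f := fun r : ℝ => NormedSpace.exp (r • (-L)))
    (f' := fun r : ℝ => (-L) * NormedSpace.exp (r • (-L))) (s := Set.Ici (0:ℝ)) (C := ‖L‖)
    (fun x _ => (hasDerivAt_exp_smul_const' (-L) x).hasDerivWithinAt)
    (fun x hx => by
      calc ‖(-L) * NormedSpace.exp (x • (-L))‖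
          ≤ ‖(-L)‖ * ‖NormedSpace.exp (x • (-L))‖ := norm_mul_le _ _
        _ ≤ ‖L‖ * 1 := by
            rw [norm_neg]
            exact mul_le_mul_of_nonneg_left (aux_exp_contraction L hLnonneg hx) (norm_nonneg L)
        _ = ‖L‖ := mul_one _)
    (convex_Ici 0) hb ha
  simpa [Real.norm_eq_abs] using H

private lemma aux_quadratic_bound {V : Type*} [NormedAddCommGroup V] [NormedSpace ℝ V]
    [CompleteSpace V] {f f' : ℝ → V} {a b m C : ℝ}
    (hm : m ∈ Set.Icc a b) (hC : 0 ≤ C)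
    (hf : ∀ x ∈ Set.Icc a b, HasDerivWithinAt f (f' x) (Set.Icc a b) x)
    (hf'c : ContinuousOn f' (Set.Icc a b))
    (hfm : f m = 0)
    (hbound : ∀ x ∈ Set.Icc a b, ‖f' x‖ ≤ C * |x - m|)
    {s : ℝ} (hs : s ∈ Set.Icc a b) : ‖f s‖ ≤ C / 2 * (s - m) ^ 2 := by
  have hcont : ContinuousOn f (Set.Icc a b) := fun x hx => (hf x hx).continuousWithinAt
  rcases le_total m s with hms | hsm
  · have hsub : Set.Icc m s ⊆ Set.Icc a b := Set.Icc_subset_Icc hm.1 hs.2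
    have huIcc : Set.uIcc m s ⊆ Set.Icc a b := by rw [Set.uIcc_of_le hms]; exact hsub
    have hFTC : ∫ t in m..s, f' t = f s - f m :=
      intervalIntegral.integral_eq_sub_of_hasDeriv_right_of_le hms (hcont.mono hsub)
        (fun x hx => ((hf x (hsub (Set.Ioo_subset_Icc_self hx))).hasDerivAt
          (Icc_mem_nhds (lt_of_le_of_lt hm.1 hx.1) (lt_of_lt_of_le hx.2 hs.2))).hasDerivWithinAt)
        ((hf'c.mono huIcc).intervalIntegrable)
    rw [hfm, sub_zero] at hFTC
    rw [← hFTC]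
    have hb : ∀ᵐ t ∂(volume.restrict (Set.uIoc m s)), ‖f' t‖ ≤ C * (t - m) := by
      refine (ae_restrict_iff' measurableSet_uIoc).mpr (Filter.Eventually.of_forall ?_)
      intro t ht
      rw [Set.uIoc_of_le hms] at ht
      have htI : t ∈ Set.Icc a b := hsub ⟨ht.1.le, ht.2⟩
      have := hbound t htI
      rwa [abs_of_nonneg (by linarith [ht.1])] at this
    have hgint : IntervalIntegrable (fun t : ℝ => C * (t - m)) volume m s :=
      Continuous.intervalIntegrable (by fun_prop) _ _
    calc ‖∫ t in m..s, f' t‖ ≤ |∫ t in m..s, C * (t - m)| :=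
          intervalIntegral.norm_integral_le_abs_of_norm_le hb hgint
      _ = C / 2 * (s - m) ^ 2 := by
          have hval : (∫ t in m..s, C * (t - m)) = C / 2 * (s - m) ^ 2 := by
            rw [intervalIntegral.integral_const_mul,
              intervalIntegral.integral_comp_sub_right (fun x : ℝ => x) m, integral_id]
            ring
          rw [hval, abs_of_nonneg (mul_nonneg (by linarith) (sq_nonneg _))]
  · have hsub : Set.Icc s m ⊆ Set.Icc a b := Set.Icc_subset_Icc hs.1 hm.2
    have huIcc : Set.uIcc s m ⊆ Set.Icc a b := by rw [Set.uIcc_of_le hsm]; exact hsub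
    have hFTC : ∫ t in s..m, f' t = f m - f s :=
      intervalIntegral.integral_eq_sub_of_hasDeriv_right_of_le hsm (hcont.mono hsub)
        (fun x hx => ((hf x (hsub (Set.Ioo_subset_Icc_self hx))).hasDerivAt
          (Icc_mem_nhds (lt_of_le_of_lt hs.1 hx.1) (lt_of_lt_of_le hx.2 hm.2))).hasDerivWithinAt)
        ((hf'c.mono huIcc).intervalIntegrable)
    rw [hfm, zero_sub] at hFTC
    have : ‖f s‖ = ‖∫ t in s..m, f' t‖ := by rw [hFTC, norm_neg]
    rw [this]
    have hb : ∀ᵐ t ∂(volume.restrict (Set.uIoc s m)), ‖f' t‖ ≤ C * (m - t) := by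
      refine (ae_restrict_iff' measurableSet_uIoc).mpr (Filter.Eventually.of_forall ?_)
      intro t ht
      rw [Set.uIoc_of_le hsm] at ht
      have htI : t ∈ Set.Icc a b := hsub ⟨ht.1.le, ht.2⟩
      have := hbound t htI
      rwa [abs_of_nonpos (by linarith [ht.2]), neg_sub] at this
    have hgint : IntervalIntegrable (fun t : ℝ => C * (m - t)) volume s m :=
      Continuous.intervalIntegrable (by fun_prop) _ _
    calc ‖∫ t in s..m, f' t‖ ≤ |∫ t in s..m, C * (m - t)| :=
          intervalIntegral.norm_integral_le_abs_of_norm_le hb hgint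
      _ = C / 2 * (s - m) ^ 2 := by
          have hval : (∫ t in s..m, C * (m - t)) = C / 2 * (s - m) ^ 2 := by
            rw [intervalIntegral.integral_const_mul,
              intervalIntegral.integral_comp_sub_left (fun x : ℝ => x) m, integral_id]
            ring
          rw [hval, abs_of_nonneg (mul_nonneg (by linarith) (sq_nonneg _))]

/-- Vector midpoint quadrature estimate with a contraction semigroup: if `L` is
self-adjoint positive semidefinite and `g : ℝ → V` is `C²` on `[0, τ]` with
`‖g'‖ ≤ N₁`, `‖g''‖ ≤ N₂`, then
`‖∫₀^τ exp(-(τ-s)L)(g(s) - g(τ/2)) ds‖ ≤ (‖L‖ N₁/12 + N₂/24) τ³`. -/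
theorem semigroup_midpoint_quadrature_estimate
    {V : Type*} [NormedAddCommGroup V] [InnerProductSpace ℝ V]
    [FiniteDimensional ℝ V] [Nontrivial V]
    (L : V →L[ℝ] V) (hL : IsSelfAdjoint L)
    (hLnonneg : ∀ h : V, 0 ≤ ⟪L h, h⟫)
    (τ N₁ N₂ : ℝ) (hτ : 0 < τ)
    (g g' g'' : ℝ → V)
    (hg : ∀ s ∈ Set.Icc (0 : ℝ) τ, HasDerivWithinAt g (g' s) (Set.Icc 0 τ) s)
    (hg' : ∀ s ∈ Set.Icc (0 : ℝ) τ, HasDerivWithinAt g' (g'' s) (Set.Icc 0 τ) s)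
    (hg''c : ContinuousOn g'' (Set.Icc 0 τ))
    (hgN₁ : ∀ s ∈ Set.Icc (0 : ℝ) τ, ‖g' s‖ ≤ N₁)
    (hgN₂ : ∀ s ∈ Set.Icc (0 : ℝ) τ, ‖g'' s‖ ≤ N₂) :
    ‖∫ s in (0 : ℝ)..τ, NormedSpace.exp (-(τ - s) • L) (g s - g (τ / 2))‖
      ≤ (‖L‖ * N₁ / 12 + N₂ / 24) * τ ^ 3 := by
  have hτ0 : (0:ℝ) ≤ τ := hτ.le
  set m : ℝ := τ / 2 with hm
  have hmI : m ∈ Set.Icc (0:ℝ) τ := ⟨by positivity, by rw [hm]; linarith⟩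
  have hN₁0 : 0 ≤ N₁ := le_trans (norm_nonneg _) (hgN₁ m hmI)
  have hN₂0 : 0 ≤ N₂ := le_trans (norm_nonneg _) (hgN₂ m hmI)
  have hgc : ContinuousOn g (Set.Icc 0 τ) := fun s hs => (hg s hs).continuousWithinAt
  have hg'c : ContinuousOn g' (Set.Icc 0 τ) := fun s hs => (hg' s hs).continuousWithinAt
  set E : ℝ → V →L[ℝ] V := fun s => NormedSpace.exp ((τ - s) • (-L)) with hE
  have hrw : ∀ s : ℝ, NormedSpace.exp (-(τ - s) • L) = E s := fun s => by
    rw [hE]; congr 1; rw [neg_smul, smul_neg]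
  have hEc : Continuous E := by
    have hc : Continuous (fun r : ℝ => NormedSpace.exp (r • (-L))) :=
      continuous_iff_continuousAt.2 fun r => (hasDerivAt_exp_smul_const' (-L) r).continuousAt
    exact hc.comp (continuous_const.sub continuous_id)
  have hEcontr : ∀ s ∈ Set.Icc (0:ℝ) τ, ‖E s‖ ≤ 1 := fun s hs =>
    aux_exp_contraction L hLnonneg (by linarith [hs.2])
  have hElip : ∀ s ∈ Set.Icc (0:ℝ) τ, ‖E s - E m‖ ≤ ‖L‖ * |s - m| := by
    intro s hs
    have h := aux_exp_lipschitz L hLnonneg (a := τ - s) (b := τ - m)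
      (by linarith [hs.2]) (by linarith [hmI.2])
    rw [show τ - s - (τ - m) = m - s by ring, abs_sub_comm] at h
    exact h
  have hgMVT : ∀ s ∈ Set.Icc (0:ℝ) τ, ‖g s - g m‖ ≤ N₁ * |s - m| := fun s hs => by
    have := Convex.norm_image_sub_le_of_norm_hasDerivWithin_le hg hgN₁ (convex_Icc 0 τ) hmI hs
    simpa [Real.norm_eq_abs] using this
  have hg'MVT : ∀ s ∈ Set.Icc (0:ℝ) τ, ‖g' s - g' m‖ ≤ N₂ * |s - m| := fun s hs => by
    have := Convex.norm_image_sub_le_of_norm_hasDerivWithin_le hg' hgN₂ (convex_Icc 0 τ) hmI hs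
    simpa [Real.norm_eq_abs] using this
  set c : V := g' m with hc
  set h : ℝ → V := fun s => g s - g m - (s - m) • c with hh
  have hhd : ∀ x ∈ Set.Icc (0:ℝ) τ, HasDerivWithinAt h (g' x - c) (Set.Icc 0 τ) x := by
    intro x hx
    have h1 : HasDerivWithinAt (fun s : ℝ => (s - m) • c) ((1:ℝ) • c) (Set.Icc 0 τ) x :=
      (((hasDerivAt_id x).sub_const m).smul_const c).hasDerivWithinAt
    have h2 := ((hg x hx).sub_const (g m)).sub h1
    simp only [one_smul] at h2
    exact h2
  have hhb : ∀ s ∈ Set.Icc (0:ℝ) τ, ‖h s‖ ≤ N₂ / 2 * (s - m) ^ 2 := by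
    intro s hs
    refine aux_quadratic_bound hmI hN₂0 hhd (hg'c.sub continuousOn_const) (by simp [hh]) ?_ hs
    intro x hx
    simpa [hc] using hg'MVT x hx
  have huIcc : Set.uIcc (0:ℝ) τ = Set.Icc 0 τ := Set.uIcc_of_le hτ0
  have hwc : ContinuousOn (fun s => g s - g m) (Set.Icc (0:ℝ) τ) := hgc.sub continuousOn_const
  have hInt1 : IntervalIntegrable (fun s => (E s - E m) (g s - g m)) volume 0 τ := by
    apply ContinuousOn.intervalIntegrable
    rw [huIcc]
    exact (hEc.continuousOn.sub continuousOn_const).clm_apply hwc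
  have hIntw : IntervalIntegrable (fun s => g s - g m) volume 0 τ := by
    apply ContinuousOn.intervalIntegrable; rw [huIcc]; exact hwc
  have hInt2 : IntervalIntegrable (fun s => E m (g s - g m)) volume 0 τ := by
    apply ContinuousOn.intervalIntegrable; rw [huIcc]
    exact continuousOn_const.clm_apply hwc
  have hsplit : (∫ s in (0:ℝ)..τ, NormedSpace.exp (-(τ - s) • L) (g s - g m))
      = (∫ s in (0:ℝ)..τ, (E s - E m) (g s - g m))
        + E m (∫ s in (0:ℝ)..τ, (g s - g m)) := by
    rw [← ContinuousLinearMap.intervalIntegral_comp_comm (E m) hIntw,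
      ← intervalIntegral.integral_add hInt1 hInt2]
    apply intervalIntegral.integral_congr
    intro s _
    simp only [hrw, ContinuousLinearMap.sub_apply]
    abel
  have hquad : ∫ s in (0:ℝ)..τ, (s - m) ^ 2 = τ ^ 3 / 12 := by
    rw [intervalIntegral.integral_comp_sub_right (fun x : ℝ => x ^ 2) m, integral_pow, hm]
    norm_num
    ring
  have hA : ‖∫ s in (0:ℝ)..τ, (E s - E m) (g s - g m)‖ ≤ ‖L‖ * N₁ * (τ ^ 3 / 12) := by
    have hb : ∀ᵐ t ∂(volume.restrict (Set.uIoc (0:ℝ) τ)),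
        ‖(E t - E m) (g t - g m)‖ ≤ ‖L‖ * N₁ * (t - m) ^ 2 := by
      refine (ae_restrict_iff' measurableSet_uIoc).mpr (Filter.Eventually.of_forall ?_)
      intro t ht
      have htI : t ∈ Set.Icc (0:ℝ) τ := by
        rw [Set.uIoc_of_le hτ0] at ht; exact ⟨ht.1.le, ht.2⟩
      calc ‖(E t - E m) (g t - g m)‖ ≤ ‖E t - E m‖ * ‖g t - g m‖ :=
            ContinuousLinearMap.le_opNorm _ _
        _ ≤ (‖L‖ * |t - m|) * (N₁ * |t - m|) :=
            mul_le_mul (hElip t htI) (hgMVT t htI) (norm_nonneg _) (by positivity)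
        _ = ‖L‖ * N₁ * (t - m) ^ 2 := by rw [← sq_abs (t - m)]; ring
    have hgint : IntervalIntegrable (fun t : ℝ => ‖L‖ * N₁ * (t - m) ^ 2) volume 0 τ :=
      Continuous.intervalIntegrable (by fun_prop) _ _
    calc ‖∫ s in (0:ℝ)..τ, (E s - E m) (g s - g m)‖
        ≤ |∫ t in (0:ℝ)..τ, ‖L‖ * N₁ * (t - m) ^ 2| :=
          intervalIntegral.norm_integral_le_abs_of_norm_le hb hgint
      _ = ‖L‖ * N₁ * (τ ^ 3 / 12) := by
          rw [intervalIntegral.integral_const_mul, hquad, abs_of_nonneg (by positivity)]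
  have hwint : (∫ s in (0:ℝ)..τ, (g s - g m)) = ∫ s in (0:ℝ)..τ, h s := by
    have hlin : (∫ s in (0:ℝ)..τ, (s - m) • c) = 0 := by
      rw [intervalIntegral.integral_smul_const]
      have hz : (∫ s in (0:ℝ)..τ, (s - m)) = 0 := by
        rw [intervalIntegral.integral_comp_sub_right (fun x : ℝ => x) m,
          integral_id, hm]
        ring
      rw [hz, zero_smul]
    have hInth : IntervalIntegrable h volume 0 τ := by
      apply ContinuousOn.intervalIntegrable; rw [huIcc]
      exact hwc.sub ((continuousOn_id.sub continuousOn_const).smul continuousOn_const)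
    have hIntlin : IntervalIntegrable (fun s : ℝ => (s - m) • c) volume 0 τ :=
      Continuous.intervalIntegrable (by fun_prop) _ _
    calc (∫ s in (0:ℝ)..τ, (g s - g m)) = ∫ s in (0:ℝ)..τ, (h s + (s - m) • c) := by
          apply intervalIntegral.integral_congr; intro s _; simp [hh]
      _ = (∫ s in (0:ℝ)..τ, h s) + ∫ s in (0:ℝ)..τ, (s - m) • c :=
          intervalIntegral.integral_add hInth hIntlin
      _ = ∫ s in (0:ℝ)..τ, h s := by rw [hlin, add_zero]
  have hB : ‖∫ s in (0:ℝ)..τ, (g s - g m)‖ ≤ N₂ / 2 * (τ ^ 3 / 12) := by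
    rw [hwint]
    have hb : ∀ᵐ t ∂(volume.restrict (Set.uIoc (0:ℝ) τ)),
        ‖h t‖ ≤ N₂ / 2 * (t - m) ^ 2 := by
      refine (ae_restrict_iff' measurableSet_uIoc).mpr (Filter.Eventually.of_forall ?_)
      intro t ht
      have htI : t ∈ Set.Icc (0:ℝ) τ := by
        rw [Set.uIoc_of_le hτ0] at ht; exact ⟨ht.1.le, ht.2⟩
      exact hhb t htI
    have hgint : IntervalIntegrable (fun t : ℝ => N₂ / 2 * (t - m) ^ 2) volume 0 τ :=
      Continuous.intervalIntegrable (by fun_prop) _ _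
    calc ‖∫ s in (0:ℝ)..τ, h s‖ ≤ |∫ t in (0:ℝ)..τ, N₂ / 2 * (t - m) ^ 2| :=
          intervalIntegral.norm_integral_le_abs_of_norm_le hb hgint
      _ = N₂ / 2 * (τ ^ 3 / 12) := by
          rw [intervalIntegral.integral_const_mul, hquad, abs_of_nonneg (by positivity)]
  rw [hsplit]
  calc ‖(∫ s in (0:ℝ)..τ, (E s - E m) (g s - g m)) + E m (∫ s in (0:ℝ)..τ, (g s - g m))‖
      ≤ ‖∫ s in (0:ℝ)..τ, (E s - E m) (g s - g m)‖ + ‖E m (∫ s in (0:ℝ)..τ, (g s - g m))‖ :=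
        norm_add_le _ _
    _ ≤ ‖L‖ * N₁ * (τ ^ 3 / 12) + 1 * (N₂ / 2 * (τ ^ 3 / 12)) := by
        refine add_le_add hA ?_
        refine le_trans (ContinuousLinearMap.le_opNorm _ _) ?_
        exact mul_le_mul (hEcontr m hmI) hB (norm_nonneg _) zero_le_one
    _ = (‖L‖ * N₁ / 12 + N₂ / 24) * τ ^ 3 := by ring
end
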